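/- For every integer k ≥ 1, 4 ∫_0^1 x^(1+k)/(1+x^2)^2 dx = 2k ∑_{n=0}^∞ (−1)^n/(2n+k) − 1. -/

import Mathlib

/-!
Writing `1 / (2n + m + 1) = ∫₀¹ x^(2n+m)` and summing the geometric series under the integral,
the `N`-th partial sum of `∑ (-1)ⁿ / (2n + m + 1)` differs from `∫₀¹ x^m / (1 + x²)` by at most
`∫₀¹ x^(2N+m) ≤ 1 / (2N + m + 1)`. Integrating the derivative of `x^(m+1) / (1 + x²)` over `[0, 1]`
then expresses `∫₀¹ x^(m+2) / (1 + x²)²` through `∫₀¹ x^m / (1 + x²)`; take `k = m + 1`.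
-/

open Filter Finset intervalIntegral

lemma continuous_pow_div_one_add_sq_pow (p j : ℕ) :
    Continuous fun x : ℝ => x ^ p / (1 + x ^ 2) ^ j :=
  (continuous_pow p).div (by fun_prop) fun x => by positivity

lemma intervalIntegrable_pow_div_one_add_sq (p : ℕ) (a b : ℝ) :
    IntervalIntegrable (fun x : ℝ => x ^ p / (1 + x ^ 2)) MeasureTheory.volume a b := by
  simpa using (continuous_pow_div_one_add_sq_pow p 1).intervalIntegrable a b

lemma sum_range_neg_one_pow_mul_pow (m N : ℕ) (x : ℝ) :
    ∑ n ∈ range N, (-1 : ℝ) ^ n * x ^ (2 * n + m) =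
      x ^ m / (1 + x ^ 2) - (-1 : ℝ) ^ N * (x ^ (2 * N + m) / (1 + x ^ 2)) := by
  have hx : (1 : ℝ) + x ^ 2 ≠ 0 := by positivity
  induction N with
  | zero => simp
  | succ N ih =>
    rw [sum_range_succ, ih]
    field_simp
    ring

lemma integral_pow_div_one_add_sq_nonneg (p : ℕ) :
    0 ≤ ∫ x in (0 : ℝ)..1, x ^ p / (1 + x ^ 2) :=
  integral_nonneg zero_le_one fun x hx => by have := hx.1; positivity

lemma integral_pow_div_one_add_sq_le (p : ℕ) :
    ∫ x in (0 : ℝ)..1, x ^ p / (1 + x ^ 2) ≤ 1 / ((p : ℝ) + 1) := by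
  calc ∫ x in (0 : ℝ)..1, x ^ p / (1 + x ^ 2)
      ≤ ∫ x in (0 : ℝ)..1, x ^ p := by
        refine integral_mono_on zero_le_one
          (intervalIntegrable_pow_div_one_add_sq p 0 1)
          ((continuous_pow p).intervalIntegrable _ _) fun x hx =>
          div_le_self (pow_nonneg hx.1 p) (by nlinarith)
    _ = 1 / ((p : ℝ) + 1) := by simp [integral_pow]

lemma sum_range_neg_one_pow_div_eq_integral (m N : ℕ) :
    ∑ n ∈ range N, (-1 : ℝ) ^ n / (2 * n + m + 1) =
      (∫ x in (0 : ℝ)..1, x ^ m / (1 + x ^ 2)) -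
        (-1 : ℝ) ^ N * ∫ x in (0 : ℝ)..1, x ^ (2 * N + m) / (1 + x ^ 2) := by
  have hterm (n : ℕ) : (-1 : ℝ) ^ n / (2 * n + m + 1) =
      ∫ x in (0 : ℝ)..1, (-1 : ℝ) ^ n * x ^ (2 * n + m) := by
    rw [integral_const_mul, integral_pow]
    push_cast
    simp [div_eq_mul_inv, add_assoc]
  rw [sum_congr rfl fun n _ => hterm n,
    ← integral_finsetSum (f := fun n x => (-1 : ℝ) ^ n * x ^ (2 * n + m))
      fun n _ => (continuous_const.mul (continuous_pow _)).intervalIntegrable _ _]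
  simp_rw [sum_range_neg_one_pow_mul_pow]
  rw [integral_sub (intervalIntegrable_pow_div_one_add_sq m 0 1)
      ((intervalIntegrable_pow_div_one_add_sq _ 0 1).const_mul _), integral_const_mul]

lemma tendsto_sum_range_neg_one_pow_div (m : ℕ) :
    Tendsto (fun N => ∑ n ∈ range N, (-1 : ℝ) ^ n / (2 * n + m + 1)) atTop
      (nhds (∫ x in (0 : ℝ)..1, x ^ m / (1 + x ^ 2))) := by
  have herror : Tendsto (fun N : ℕ => (-1 : ℝ) ^ N *
      ∫ x in (0 : ℝ)..1, x ^ (2 * N + m) / (1 + x ^ 2)) atTop (nhds 0) := by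
    refine squeeze_zero_norm (fun N => ?_) tendsto_one_div_add_atTop_nhds_zero_nat
    rw [norm_mul, norm_pow, norm_neg, norm_one, one_pow, one_mul,
      Real.norm_of_nonneg (integral_pow_div_one_add_sq_nonneg _)]
    refine (integral_pow_div_one_add_sq_le _).trans (one_div_le_one_div_of_le (by positivity) ?_)
    push_cast
    linarith [m.cast_nonneg (α := ℝ)]
  simp_rw [sum_range_neg_one_pow_div_eq_integral]
  simpa using tendsto_const_nhds.sub herror

lemma hasDerivAt_pow_succ_div_one_add_sq (m : ℕ) (x : ℝ) :
    HasDerivAt (fun x : ℝ => x ^ (m + 1) / (1 + x ^ 2))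
      (((m : ℝ) + 1) * (x ^ m / (1 + x ^ 2)) - 2 * (x ^ (m + 2) / (1 + x ^ 2) ^ 2)) x := by
  have hx : (1 : ℝ) + x ^ 2 ≠ 0 := by positivity
  refine ((hasDerivAt_pow (m + 1) x).div ((hasDerivAt_pow 2 x).const_add 1) hx).congr_deriv ?_
  simp only [Nat.add_sub_cancel, Nat.cast_add, Nat.cast_one, Nat.cast_ofNat]
  field_simp
  ring

lemma four_mul_integral_pow_div_one_add_sq_sq (m : ℕ) :
    4 * ∫ x in (0 : ℝ)..1, x ^ (m + 2) / (1 + x ^ 2) ^ 2 =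
      2 * ((m : ℝ) + 1) * (∫ x in (0 : ℝ)..1, x ^ m / (1 + x ^ 2)) - 1 := by
  have hftc := integral_eq_sub_of_hasDerivAt
    (fun x _ => hasDerivAt_pow_succ_div_one_add_sq m x)
    (((intervalIntegrable_pow_div_one_add_sq m 0 1).const_mul _).sub
      (((continuous_pow_div_one_add_sq_pow (m + 2) 2).intervalIntegrable 0 1).const_mul _))
  rw [integral_sub ((intervalIntegrable_pow_div_one_add_sq m 0 1).const_mul _)
      (((continuous_pow_div_one_add_sq_pow (m + 2) 2).intervalIntegrable 0 1).const_mul _),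
    integral_const_mul, integral_const_mul] at hftc
  norm_num at hftc
  linarith

theorem stmt_4 (k : ℕ) (hk : 1 ≤ k) :
    Filter.Tendsto
      (fun N => 2 * (k:ℝ) * ∑ n ∈ Finset.range N, (-1:ℝ)^n / (2*n + k) - 1)
      Filter.atTop
      (nhds (4 * ∫ x in (0:ℝ)..1, x^(1 + k) / (1 + x^2)^2)) := by
  obtain ⟨m, rfl⟩ := Nat.exists_eq_add_of_le' hk
  rw [show 1 + (m + 1) = m + 2 by omega, four_mul_integral_pow_div_one_add_sq_sq]
  push_cast
  simpa only [add_assoc] using ((tendsto_sum_range_neg_one_pow_div m).const_mul _).sub_const 1
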